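/- For all natural numbers j ≥ 1 and k ≥ 0, the series ∑_{r=1}^∞ arctan( F_{4j} / F_{4jr+2k−1} ) converges and its sum equals arctan( L_{2j} / L_{2j+2k−1} ). -/

import Mathlib

def lucas : ℕ → ℕ
  | 0 => 2
  | 1 => 1
  | n + 2 => lucas (n + 1) + lucas n

/-!
By Binet's formulas, for odd `a` and even `m` we have `L (a + 2m) - L a = 5 F (a + m) F m` and
`L a * L (a + 2m) + L m ^ 2 = 5 F (a + m) ^ 2`; with `F (2m) = F m * L m` and the subtraction formula
for `arctan` this gives
`arctan (F (2m) / F (a + m)) = arctan (L m / L a) - arctan (L m / L (a + 2m))`.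
Taking `m = 2j` and `a = 2j + 2k - 1`, the series telescopes; its terms are nonnegative and
`L m / L (a + 2mr) → 0`, so the partial sums converge to `arctan (L m / L a)`.
-/

open Real Filter Topology goldenRatio

lemma lucas_pos : ∀ n, 0 < lucas n
  | 0 | 1 => by decide
  | n + 2 => Nat.add_pos_left (lucas_pos (n + 1)) _

lemma le_lucas : ∀ n, n ≤ lucas n
  | 0 | 1 => by decide
  | n + 2 => by
    have := le_lucas (n + 1); have := lucas_pos n
    simp only [lucas]; omega

lemma coe_lucas_eq : ∀ n, (lucas n : ℝ) = φ ^ n + ψ ^ n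
  | 0 => by norm_num [lucas]
  | 1 => by simp [lucas]
  | n + 2 => by
    rw [lucas, Nat.cast_add, coe_lucas_eq (n + 1), coe_lucas_eq n, pow_add φ n 2, pow_add ψ n 2,
      goldenRatio_sq, goldenConj_sq]
    ring

lemma five_mul_fib_mul_fib (m n : ℕ) :
    5 * (Nat.fib m : ℝ) * Nat.fib n = (φ ^ m - ψ ^ m) * (φ ^ n - ψ ^ n) := by
  rw [coe_fib_eq, coe_fib_eq, mul_assoc, div_mul_div_comm, Real.mul_self_sqrt (by norm_num)]
  ring

lemma coe_fib_two_mul (n : ℕ) : (Nat.fib (2 * n) : ℝ) = Nat.fib n * lucas n := by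
  rw [coe_fib_eq, coe_fib_eq, coe_lucas_eq]
  ring

lemma coe_lucas_add_two_mul_sub (a : ℕ) {m : ℕ} (hm : Even m) :
    (lucas (a + 2 * m) : ℝ) - lucas a = 5 * Nat.fib (a + m) * Nat.fib m := by
  have hφψ : φ ^ m * ψ ^ m = 1 := by rw [← mul_pow, goldenRatio_mul_goldenConj, hm.neg_one_pow]
  rw [five_mul_fib_mul_fib, coe_lucas_eq, coe_lucas_eq]
  linear_combination (φ ^ a + ψ ^ a) * hφψ

lemma coe_lucas_mul_lucas_add_two_mul_add_sq {a : ℕ} (ha : Odd a) (m : ℕ) :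
    (lucas a : ℝ) * lucas (a + 2 * m) + (lucas m : ℝ) ^ 2 = 5 * (Nat.fib (a + m) : ℝ) ^ 2 := by
  have hφψa : φ ^ a * ψ ^ a = -1 := by rw [← mul_pow, goldenRatio_mul_goldenConj, ha.neg_one_pow]
  rw [coe_lucas_eq, coe_lucas_eq, coe_lucas_eq]
  linear_combination (φ ^ m + ψ ^ m) ^ 2 * hφψa
    - five_mul_fib_mul_fib (a + m) (a + m)

lemma arctan_sub_arctan {x y : ℝ} (h : -1 < x * y) :
    arctan x - arctan y = arctan ((x - y) / (1 + x * y)) := by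
  rw [sub_eq_add_neg, ← arctan_neg, arctan_add (by linarith)]
  ring_nf

lemma arctan_fib_div_fib_eq_sub {a m : ℕ} (ha : Odd a) (hm : Even m) :
    arctan (Nat.fib (2 * m) / Nat.fib (a + m))
      = arctan (lucas m / lucas a) - arctan (lucas m / lucas (a + 2 * m)) := by
  have hLa : (0 : ℝ) < lucas a := by exact_mod_cast lucas_pos a
  have hLb : (0 : ℝ) < lucas (a + 2 * m) := by exact_mod_cast lucas_pos _
  have hF : (0 : ℝ) < Nat.fib (a + m) := by
    exact_mod_cast Nat.fib_pos.mpr (by rcases ha with ⟨c, rfl⟩; omega)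
  have hLm : (0 : ℝ) < lucas m := by exact_mod_cast lucas_pos m
  have hxy : (0 : ℝ) < lucas m / lucas a * (lucas m / lucas (a + 2 * m)) := by positivity
  rw [arctan_sub_arctan (by linarith)]
  congr 1
  rw [coe_fib_two_mul]
  field_simp
  linear_combination (Nat.fib m : ℝ) * coe_lucas_mul_lucas_add_two_mul_add_sq ha m
    - (Nat.fib (a + m) : ℝ) * coe_lucas_add_two_mul_sub a hm

lemma hasSum_sub_succ_of_antitone {g : ℕ → ℝ} (hg : Antitone g) {l : ℝ}
    (hl : Tendsto g atTop (𝓝 l)) : HasSum (fun n => g n - g (n + 1)) (g 0 - l) := by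
  rw [hasSum_iff_tendsto_nat_of_nonneg (fun n => sub_nonneg.2 (hg n.le_succ))]
  simp_rw [Finset.sum_range_sub']
  exact tendsto_const_nhds.sub hl

lemma hasSum_arctan_fib_div_fib {a m : ℕ} (ha : Odd a) (hm : Even m) (hm₀ : 0 < m) :
    HasSum (fun r => arctan (Nat.fib (2 * m) / Nat.fib (a + m + 2 * m * r)))
      (arctan (lucas m / lucas a)) := by
  set g : ℕ → ℝ := fun r => arctan (lucas m / lucas (a + 2 * m * r))
  have hterm (r : ℕ) :
      arctan (Nat.fib (2 * m) / Nat.fib (a + m + 2 * m * r)) = g r - g (r + 1) := by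
    have hodd : Odd (a + 2 * m * r) := ha.add_even (even_two_mul _ |>.mul_right r)
    rw [show a + m + 2 * m * r = a + 2 * m * r + m by ring, arctan_fib_div_fib_eq_sub hodd hm,
      show a + 2 * m * r + 2 * m = a + 2 * m * (r + 1) by ring]
  have hanti : Antitone g := antitone_nat_of_succ_le fun r => by
    rw [← sub_nonneg, ← hterm]
    exact arctan_nonneg.2 (by positivity)
  have hlucas : Tendsto (fun r => (lucas (a + 2 * m * r) : ℝ)) atTop atTop :=
    tendsto_natCast_atTop_atTop.comp <| tendsto_atTop_mono
      (fun r => (show r ≤ a + 2 * m * r by nlinarith).trans (le_lucas _)) tendsto_id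
  have hg : Tendsto g atTop (𝓝 0) := by
    simpa [Function.comp_def] using
      (continuous_arctan.tendsto 0).comp (tendsto_const_nhds.div_atTop hlucas)
  simpa [← hterm, g] using hasSum_sub_succ_of_antitone hanti hg

theorem stmt18 (j k : ℕ) (hj : 1 ≤ j) :
    HasSum (fun r : ℕ =>
        Real.arctan ((Nat.fib (4 * j) : ℝ) /
          (Nat.fib (4 * j * (1 + r) + 2 * k - 1) : ℝ)))
      (Real.arctan ((lucas (2 * j) : ℝ) / (lucas (2 * j + 2 * k - 1) : ℝ))) := by
  have ha : Odd (2 * j + 2 * k - 1) := ⟨j + k - 1, by omega⟩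
  convert hasSum_arctan_fib_div_fib ha (even_two_mul j) (by omega) using 6 with r
  · ring
  · have h₁ : 4 * j * (1 + r) = 4 * j + 4 * (j * r) := by ring
    have h₂ : 2 * (2 * j) * r = 4 * (j * r) := by ring
    omega
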